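/- arXiv:1203.1969 — 2 statements merged into one kernel-verified Lean document; each statement's English description precedes it below -/
import Mathlib

section
/- Let I be a squarefree monomial ideal in S = K[x₁,…,xₙ] over a field K. If the associated hypergraph H(I) has no special triangle, then I^(2) = I². -/
open MvPolynomial CategoryTheory

/-- `Δ` is a simplicial complex on the vertex set `V`: it is closed under subsets,
contains the empty face and contains every singleton. -/
def IsSimplicialComplex {V : Type} (Δ : Set (Finset V)) : Prop :=
  (∀ F ∈ Δ, ∀ G, G ⊆ F → G ∈ Δ) ∧ (∅ : Finset V) ∈ Δ ∧ ∀ v : V, ({v} : Finset V) ∈ Δ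

/-- The Stanley–Reisner ideal of `Δ`: the ideal generated by the squarefree monomials
`∏_{i ∈ F} x_i` for the non-faces `F` of `Δ`. -/
noncomputable def SRIdeal (K : Type) [Field K] {V : Type} (Δ : Set (Finset V)) :
    Ideal (MvPolynomial V K) :=
  Ideal.span ((fun F : Finset V => ∏ i ∈ F, X i) '' {F | F ∉ Δ})

/-- The irrelevant maximal ideal `m = (x_v : v ∈ V)` of the polynomial ring. -/
noncomputable def mxIdeal (K : Type) [Field K] (V : Type) : Ideal (MvPolynomial V K) :=
  Ideal.span (Set.range (X : V → MvPolynomial V K))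

/-- The depth of the ideal `m` on the ring `A`: the supremum of the lengths of
regular sequences on `A` contained in `m`. -/
noncomputable def ringDepth (A : Type) [CommRing A] (m : Ideal A) : ℕ∞ :=
  sSup {d : ℕ∞ | ∃ rs : List A, (rs.length : ℕ∞) = d ∧ (∀ r ∈ rs, r ∈ m) ∧
    RingTheory.Sequence.IsRegular A rs}

/-- `S ⧸ J` is Cohen–Macaulay: its depth (with respect to the image of the maximal
ideal `m`) equals its Krull dimension. -/
def IsCMQuot (S : Type) [CommRing S] (m J : Ideal S) : Prop :=
  ((ringDepth (S ⧸ J) (m.map (Ideal.Quotient.mk J)) : ℕ∞) : WithBot ℕ∞) = ringKrullDim (S ⧸ J)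

/-- The second symbolic power of an ideal `I`: the intersection of `P ^ 2` over the
minimal primes `P` of `I`. -/
noncomputable def symb2 {S : Type} [CommRing S] (I : Ideal S) : Ideal S :=
  ⨅ P ∈ I.minimalPrimes, P ^ 2

/-- `Ext_A^i(A/m, A)`. -/
noncomputable def extPow (A : Type) [CommRing A] (m : Ideal A) (i : ℕ) : ModuleCat A :=
  ((Ext A (ModuleCat A) i).obj (Opposite.op (ModuleCat.of A (A ⧸ m)))).obj (ModuleCat.of A A)

/-- `S ⧸ J` (with maximal ideal the image of `m`) is Gorenstein: it is Cohen–Macaulay and,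
with `d = dim S/J` and `k = (S/J)/m` the residue field, the Bass numbers are those of a
Gorenstein ring: `Ext^i(k, S/J) = 0` for `i ≠ d` and `Ext^d(k, S/J) ≅ k`. -/
def IsGorQuot (S : Type) [CommRing S] (m J : Ideal S) : Prop :=
  IsCMQuot S m J ∧ ∃ d : ℕ, ((d : ℕ∞) : WithBot ℕ∞) = ringKrullDim (S ⧸ J) ∧
    (∀ i : ℕ, i ≠ d → Subsingleton (extPow (S ⧸ J) (m.map (Ideal.Quotient.mk J)) i)) ∧
    Nonempty ((extPow (S ⧸ J) (m.map (Ideal.Quotient.mk J)) d) ≃ₗ[S ⧸ J]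
      ((S ⧸ J) ⧸ (m.map (Ideal.Quotient.mk J))))

/-- `S ⧸ J` is quasi-Buchsbaum: `m` annihilates the local cohomology module
`H_m^i(S/J)` for all `i < dim S/J`. -/
def IsQuasiBuchsbaum (S : Type) [CommRing S] (m J : Ideal S) : Prop :=
  ∀ i : ℕ, ((i : ℕ∞) : WithBot ℕ∞) < ringKrullDim (S ⧸ J) →
    ∀ r ∈ m, ∀ x : (localCohomology m i).obj (ModuleCat.of S (S ⧸ J)), r • x = 0

/-- `S ⧸ J` has finite local cohomology (FLC): the local cohomology module `H_m^i(S/J)`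
has finite length (equivalently, is both Noetherian and Artinian) for all `i < dim S/J`. -/
def HasFLC (S : Type) [CommRing S] (m J : Ideal S) : Prop :=
  ∀ i : ℕ, ((i : ℕ∞) : WithBot ℕ∞) < ringKrullDim (S ⧸ J) →
    IsNoetherian S ((localCohomology m i).obj (ModuleCat.of S (S ⧸ J))) ∧
    IsArtinian S ((localCohomology m i).obj (ModuleCat.of S (S ⧸ J)))

/-- Serre's condition `(S₂)`: for every prime `P` of `A`,
`depth A_P ≥ min (dim A_P) 2`. -/
def SerreS2 (A : Type) [CommRing A] : Prop :=
  ∀ (P : Ideal A) (hP : P.IsPrime),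
    haveI := hP
    min (ringKrullDim (Localization.AtPrime P)) 2 ≤
      ((ringDepth (Localization.AtPrime P)
        (IsLocalRing.maximalIdeal (Localization.AtPrime P)) : ℕ∞) : WithBot ℕ∞)

/-- The link of a face `F` in `Δ`. -/
def linkOf {V : Type} [DecidableEq V] (Δ : Set (Finset V)) (F : Finset V) : Set (Finset V) :=
  {H | H ∈ Δ ∧ H ∩ F = ∅ ∧ H ∪ F ∈ Δ}

/-- The 1-skeleton of the complex `Γ` (the graph on the vertices of `Γ` whose edges are the
1-dimensional faces of `Γ`) is connected of diameter at most 2: any two distinct vertices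
are joined by a path of length at most 2. -/
def skeletonDiamLE2 {V : Type} [DecidableEq V] (Γ : Set (Finset V)) : Prop :=
  ∀ u v : V, ({u} : Finset V) ∈ Γ → ({v} : Finset V) ∈ Γ → u ≠ v →
    (({u, v} : Finset V) ∈ Γ ∨ ∃ w : V, ({u, w} : Finset V) ∈ Γ ∧ ({w, v} : Finset V) ∈ Γ)

/-- `linkOf Δ F` has dimension at least 1, i.e. it has a face with at least 2 vertices. -/
def linkDimGE1 {V : Type} [DecidableEq V] (Δ : Set (Finset V)) (F : Finset V) : Prop :=
  ∃ H ∈ linkOf Δ F, 2 ≤ H.card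

/-- The squarefree monomial ideal generated by the monomials `x^H = ∏_{a ∈ H} x_a`, `H ∈ E`. -/
noncomputable def sqfIdeal (K : Type) [Field K] {V : Type} (E : Set (Finset V)) :
    Ideal (MvPolynomial V K) :=
  Ideal.span ((fun H : Finset V => ∏ a ∈ H, X a) '' E)

/-- The edges `H₁, H₂, H₃` make the special triangle `{i, j, k}`. -/
def MakeSpecialTriangle {V : Type} [DecidableEq V] (H₁ H₂ H₃ : Finset V) (i j k : V) : Prop :=
  i ≠ j ∧ j ≠ k ∧ i ≠ k ∧
  H₁ ∩ ({i, j, k} : Finset V) = {j, k} ∧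
  H₂ ∩ ({i, j, k} : Finset V) = {i, k} ∧
  H₃ ∩ ({i, j, k} : Finset V) = {i, j}

/-!
A monomial `x^m` lies in the symbolic square `I^(2)` exactly when, for every vertex cover `C` of
the hypergraph, `x^m` lies in `P_C²`, i.e. `m` has total weight at least two on `C`. To show it
lies in `I²`, look at the edges inside the support `W` of `m` and at the set `U` of vertices where
`m` equals one. If two such edges meet only outside `U`, their product divides `x^m`. Otherwise
these edges pairwise meet inside `U`; a common vertex `u ∈ U` would make `Wᶜ ∪ {u}` a vertex cover
of weight one, and without one, a minimal subfamily with no common vertex in `U` yields a special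
triangle (a Helly-type argument).
-/

open Finsupp

def IsVertexCover {V : Type*} (E : Set (Finset V)) (C : Set V) : Prop :=
  ∀ H ∈ E, ∃ v ∈ H, v ∈ C

theorem sum_single_add_sum_single_le {V : Type*} {H H' : Finset V} {m : V →₀ ℕ}
    (hH : H ⊆ m.support) (hH' : H' ⊆ m.support) (hboth : ∀ v ∈ H, v ∈ H' → 2 ≤ m v) :
    (∑ a ∈ H, single a 1) + ∑ a ∈ H', single a 1 ≤ m := by
  classical
  intro v
  have h := hboth v
  have hv : v ∈ H → m v ≠ 0 := fun hv => mem_support_iff.1 (hH hv)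
  have hv' : v ∈ H' → m v ≠ 0 := fun hv => mem_support_iff.1 (hH' hv)
  simp only [Finsupp.coe_add, Pi.add_apply, coe_finsetSum, Finset.sum_apply, single_apply,
    Finset.sum_ite_eq']
  split_ifs <;> grind

section SpecialTriangle

variable {V : Type} [DecidableEq V]

theorem makeSpecialTriangle_of_mem {H₁ H₂ H₃ : Finset V} {i j k : V}
    (hi₁ : i ∉ H₁) (hi₂ : i ∈ H₂) (hi₃ : i ∈ H₃)
    (hj₁ : j ∈ H₁) (hj₂ : j ∉ H₂) (hj₃ : j ∈ H₃)
    (hk₁ : k ∈ H₁) (hk₂ : k ∈ H₂) (hk₃ : k ∉ H₃) :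
    MakeSpecialTriangle H₁ H₂ H₃ i j k := by
  refine ⟨fun h => hi₁ (h ▸ hj₁), fun h => hj₂ (h ▸ hk₂), fun h => hi₁ (h ▸ hk₁),
    ?_, ?_, ?_⟩ <;>
  · ext v
    simp only [Finset.mem_inter, Finset.mem_insert, Finset.mem_singleton]
    constructor
    · rintro ⟨hv, rfl | rfl | rfl⟩ <;> tauto
    · rintro (rfl | rfl) <;> tauto

theorem exists_makeSpecialTriangle_of_pairwise_inter {F : Finset (Finset V)} {U : Set V}
    (hF : F.Nonempty) (hpair : ∀ H ∈ F, ∀ H' ∈ F, (↑H ∩ ↑H' ∩ U : Set V).Nonempty)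
    (hcommon : ¬ ∃ u ∈ U, ∀ H ∈ F, u ∈ H) :
    ∃ H₁ ∈ F, ∃ H₂ ∈ F, ∃ H₃ ∈ F, ∃ i j k : V, MakeSpecialTriangle H₁ H₂ H₃ i j k := by
  obtain ⟨G, hGF, hG⟩ :=
    exists_minimal_le_of_wellFoundedLT (fun G => ¬ ∃ u ∈ U, ∀ H ∈ G, u ∈ H) F hcommon
  have hdrop : ∀ H ∈ G, ∃ u ∈ U, u ∉ H ∧ ∀ H' ∈ G, H' ≠ H → u ∈ H' := by
    intro H hH
    obtain ⟨u, hu, huG⟩ := not_not.1 (hG.not_prop_of_lt (Finset.erase_ssubset hH))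
    refine ⟨u, hu, fun huH => hG.prop ⟨u, hu, fun H' hH' => ?_⟩,
      fun H' hH' hne => huG H' (Finset.mem_erase.2 ⟨hne, hH'⟩)⟩
    by_cases h : H' = H
    · exact h ▸ huH
    · exact huG H' (Finset.mem_erase.2 ⟨h, hH'⟩)
  have hescape : ∀ a ∈ F, ∀ b ∈ F, ∃ H ∈ G, H ≠ a ∧ H ≠ b := by
    intro a ha b hb
    obtain ⟨v, ⟨hva, hvb⟩, hvU⟩ := hpair a ha b hb
    obtain ⟨H, hH, hvH⟩ : ∃ H ∈ G, v ∉ H := by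
      by_contra! h
      exact hG.prop ⟨v, hvU, h⟩
    exact ⟨H, hH, fun h => hvH (h ▸ hva), fun h => hvH (h ▸ hvb)⟩
  obtain ⟨H₀, hH₀⟩ := hF
  obtain ⟨H₁, h₁, -⟩ := hescape H₀ hH₀ H₀ hH₀
  obtain ⟨H₂, h₂, h₂₁, -⟩ := hescape H₁ (hGF h₁) H₁ (hGF h₁)
  obtain ⟨H₃, h₃, h₃₁, h₃₂⟩ := hescape H₁ (hGF h₁) H₂ (hGF h₂)
  obtain ⟨i, -, hi₁, hi⟩ := hdrop H₁ h₁
  obtain ⟨j, -, hj₂, hj⟩ := hdrop H₂ h₂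
  obtain ⟨k, -, hk₃, hk⟩ := hdrop H₃ h₃
  exact ⟨H₁, hGF h₁, H₂, hGF h₂, H₃, hGF h₃, i, j, k, makeSpecialTriangle_of_mem
    hi₁ (hi H₂ h₂ h₂₁) (hi H₃ h₃ h₃₁) (hj H₁ h₁ h₂₁.symm) hj₂ (hj H₃ h₃ h₃₂)
    (hk H₁ h₁ h₃₁.symm) (hk H₂ h₂ h₃₂.symm) hk₃⟩

theorem exists_add_le_of_forall_isVertexCover {E : Set (Finset V)}
    (hno : ¬ ∃ H₁ ∈ E, ∃ H₂ ∈ E, ∃ H₃ ∈ E, ∃ i j k : V, MakeSpecialTriangle H₁ H₂ H₃ i j k)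
    {m : V →₀ ℕ}
    (hm : ∀ C, IsVertexCover E C → ∃ i ∈ C, ∃ j ∈ C, single i 1 + single j 1 ≤ m) :
    ∃ H ∈ E, ∃ H' ∈ E, (∑ a ∈ H, single a 1) + ∑ a ∈ H', single a 1 ≤ m := by
  classical
  set F : Finset (Finset V) := m.support.powerset.filter (· ∈ E)
  have hF : ∀ H, H ∈ F ↔ H ∈ E ∧ H ⊆ m.support := by simp [F, and_comm]
  have hcov : ∀ S : Set V, (∀ H ∈ F, ∃ v ∈ H, v ∈ S) →
      ∃ i ∈ S, ∃ j ∈ S, single i 1 + single j 1 ≤ m := by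
    intro S hS
    have hC : IsVertexCover E ({v | m v = 0} ∪ S) := by
      intro H hH
      by_cases hHW : H ⊆ m.support
      · obtain ⟨v, hv, hvS⟩ := hS H ((hF H).2 ⟨hH, hHW⟩)
        exact ⟨v, hv, Or.inr hvS⟩
      · obtain ⟨v, hv, hvW⟩ := Finset.not_subset.1 hHW
        exact ⟨v, hv, Or.inl (notMem_support_iff.1 hvW)⟩
    obtain ⟨i, hi, j, hj, hij⟩ := hm _ hC
    have hi' : m i ≠ 0 := by
      have := hij i
      simp only [Finsupp.coe_add, Pi.add_apply, single_eq_same] at this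
      omega
    have hj' : m j ≠ 0 := by
      have := hij j
      simp only [Finsupp.coe_add, Pi.add_apply, single_eq_same] at this
      omega
    exact ⟨i, hi.resolve_left hi', j, hj.resolve_left hj', hij⟩
  have hFne : F.Nonempty := by
    by_contra! hF₀
    obtain ⟨i, hi, -⟩ := hcov ∅ (by simp [hF₀])
    exact hi
  by_contra hcon
  have hpair : ∀ H ∈ F, ∀ H' ∈ F, (↑H ∩ ↑H' ∩ {v | m v = 1} : Set V).Nonempty := by
    intro H hH H' hH'
    by_contra! hempty
    refine hcon ⟨H, ((hF H).1 hH).1, H', ((hF H').1 hH').1,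
      sum_single_add_sum_single_le ((hF H).1 hH).2 ((hF H').1 hH').2 fun v hv hv' => ?_⟩
    have hv1 : m v ≠ 1 := fun h1 => hempty.subset ⟨⟨hv, hv'⟩, h1⟩
    have hv0 : m v ≠ 0 := mem_support_iff.1 (((hF H).1 hH).2 hv)
    omega
  have hcommon : ¬ ∃ u ∈ {v | m v = 1}, ∀ H ∈ F, u ∈ H := by
    rintro ⟨u, hu : m u = 1, huF⟩
    obtain ⟨i, hi, j, hj, hij⟩ := hcov {u} fun H hH => ⟨u, huF H hH, rfl⟩
    rw [Set.mem_singleton_iff] at hi hj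
    have := hij u
    simp only [hi, hj, Finsupp.coe_add, Pi.add_apply, single_eq_same] at this
    omega
  obtain ⟨H₁, h₁, H₂, h₂, H₃, h₃, hT⟩ :=
    exists_makeSpecialTriangle_of_pairwise_inter hFne hpair hcommon
  exact hno ⟨H₁, ((hF _).1 h₁).1, H₂, ((hF _).1 h₂).1, H₃, ((hF _).1 h₃).1, hT⟩

end SpecialTriangle

namespace MvPolynomial

variable {σ R : Type*}

open scoped Pointwise in
theorem span_monomial_image_mul_span_monomial_image [CommSemiring R] (S T : Set (σ →₀ ℕ)) :
    Ideal.span ((monomial · (1 : R)) '' S) * Ideal.span ((monomial · (1 : R)) '' T) =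
      Ideal.span ((monomial · (1 : R)) '' (S + T)) := by
  rw [Ideal.span_mul_span', ← Set.image2_mul, ← Set.image2_add, Set.image_image2,
    Set.image2_image_left, Set.image2_image_right]
  simp only [monomial_mul, mul_one]

theorem mem_span_monomial_image_pow_two_iff [CommSemiring R] {S : Set (σ →₀ ℕ)}
    {f : MvPolynomial σ R} :
    f ∈ Ideal.span ((monomial · (1 : R)) '' S) ^ 2 ↔
      ∀ m ∈ f.support, ∃ s ∈ S, ∃ t ∈ S, s + t ≤ m := by
  simp only [pow_two, span_monomial_image_mul_span_monomial_image,
    mem_ideal_span_monomial_image, Set.mem_add]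
  grind

theorem isPrime_span_X_image [CommRing R] [IsDomain R] (C : Set σ) :
    (Ideal.span ((X : σ → MvPolynomial σ R) '' C)).IsPrime := by
  classical
  set P := Ideal.span ((X : σ → MvPolynomial σ R) '' C)
  let φ : MvPolynomial σ R →ₐ[R] MvPolynomial σ R := aeval fun i => if i ∈ C then 0 else X i
  have hφ : (Ideal.Quotient.mkₐ R P).comp φ = Ideal.Quotient.mkₐ R P := by
    ext i
    by_cases hi : i ∈ C
    · have hXi : X i ∈ P := Ideal.subset_span (Set.mem_image_of_mem X hi)
      simp [φ, hi, Ideal.Quotient.eq_zero_iff_mem.2 hXi]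
    · simp [φ, hi]
  have hker : P = RingHom.ker φ := by
    refine le_antisymm ?_ fun f hf => ?_
    · rw [Ideal.span_le]
      rintro - ⟨i, hi, rfl⟩
      simp [φ, hi]
    · rw [← Ideal.Quotient.eq_zero_iff_mem, ← Ideal.Quotient.mkₐ_eq_mk R, ← hφ]
      simp [(RingHom.mem_ker).1 hf]
  rw [hker]
  exact RingHom.ker_isPrime _

theorem mem_span_X_image_pow_two_iff [CommSemiring R] {C : Set σ} {f : MvPolynomial σ R} :
    f ∈ Ideal.span (X '' C) ^ 2 ↔
      ∀ m ∈ f.support, ∃ i ∈ C, ∃ j ∈ C, single i 1 + single j 1 ≤ m := by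
  rw [show (X '' C : Set (MvPolynomial σ R)) = (monomial · 1) '' ((single · 1) '' C) by
    rw [Set.image_image]; rfl, mem_span_monomial_image_pow_two_iff]
  simp only [Set.exists_mem_image]

end MvPolynomial

theorem pow_two_le_symb2 {S : Type} [CommRing S] (I : Ideal S) : I ^ 2 ≤ symb2 I :=
  le_iInf₂ fun _ hP => Ideal.pow_right_mono hP.1.2 2

theorem symb2_le_pow_two {S : Type} [CommRing S] {I P : Ideal S} [P.IsPrime]
    (hIP : I ≤ P) : symb2 I ≤ P ^ 2 := by
  obtain ⟨Q, hQ, hQP⟩ := Ideal.exists_minimalPrimes_le hIP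
  exact (iInf₂_le Q hQ).trans (Ideal.pow_right_mono hQP 2)

section SqfIdeal

variable {K V : Type} [Field K]

theorem sqfIdeal_eq_span_monomial_image (E : Set (Finset V)) :
    sqfIdeal K E = Ideal.span ((monomial · (1 : K)) '' ((fun H => ∑ a ∈ H, single a 1) '' E)) := by
  rw [sqfIdeal, Set.image_image]
  exact congrArg Ideal.span (Set.image_congr fun H _ => (monomial_sum_one H _).symm)

theorem sqfIdeal_le_span_X_image {E : Set (Finset V)} {C : Set V} (hC : IsVertexCover E C) :
    sqfIdeal K E ≤ Ideal.span (X '' C) := by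
  rw [sqfIdeal, Ideal.span_le]
  rintro - ⟨H, hH, rfl⟩
  obtain ⟨v, hvH, hvC⟩ := hC H hH
  exact Ideal.mem_of_dvd _ (Finset.dvd_prod_of_mem _ hvH) (Ideal.subset_span ⟨v, hvC, rfl⟩)

theorem mem_sqfIdeal_pow_two_iff {E : Set (Finset V)} {f : MvPolynomial V K} :
    f ∈ sqfIdeal K E ^ 2 ↔
      ∀ m ∈ f.support, ∃ H ∈ E, ∃ H' ∈ E, (∑ a ∈ H, single a 1) + ∑ a ∈ H', single a 1 ≤ m := by
  simp only [sqfIdeal_eq_span_monomial_image, mem_span_monomial_image_pow_two_iff,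
    Set.exists_mem_image]

end SqfIdeal

theorem stmt10_general (n : ℕ) (K : Type) [Field K] (E : Set (Finset (Fin n)))
    (hno : ¬ ∃ H₁ ∈ E, ∃ H₂ ∈ E, ∃ H₃ ∈ E, ∃ i j k : Fin n,
      MakeSpecialTriangle H₁ H₂ H₃ i j k) :
    symb2 (sqfIdeal K E) = (sqfIdeal K E) ^ 2 := by
  refine le_antisymm (fun f hf => ?_) (pow_two_le_symb2 _)
  refine mem_sqfIdeal_pow_two_iff.2 fun m hm =>
    exists_add_le_of_forall_isVertexCover hno fun C hC => ?_
  have := isPrime_span_X_image (R := K) C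
  exact mem_span_X_image_pow_two_iff.1
    (symb2_le_pow_two (sqfIdeal_le_span_X_image hC) hf) m hm

/-- If the hypergraph of minimal generators of a squarefree monomial ideal `I` has no
special triangle, then `I^(2) = I²`. -/
theorem stmt10 (n : ℕ) (K : Type) [Field K] (E : Set (Finset (Fin n)))
    (hmin : ∀ H ∈ E, ∀ H' ∈ E, H ⊆ H' → H = H')
    (hno : ¬ ∃ H₁ ∈ E, ∃ H₂ ∈ E, ∃ H₃ ∈ E, ∃ i j k : Fin n,
      MakeSpecialTriangle H₁ H₂ H₃ i j k) :
    symb2 (sqfIdeal K E) = (sqfIdeal K E) ^ 2 :=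
  stmt10_general n K E hno
end

section
/- Let I be a squarefree monomial ideal in S = K[x₁,…,xₙ] over a field K. Suppose that for every three minimal generators x^{H₁}, x^{H₂}, x^{H₃} of I making a special triangle, the monomial x^{H₁∩H₂∩H₃}·x^{H₁∪H₂∪H₃} lies in I². Then x·I ∩ (I² : x) ⊆ I² for every variable x ∈ {x₁,…,xₙ}. -/
open MvPolynomial CategoryTheory

/-!
Membership in a monomial ideal is decided monomial by monomial, and `x^e ∈ I²` exactly when
`e` dominates the sum of the exponent vectors of two generators. So for `f = x_v g` it suffices
to show: if `x^d ∈ I` (through a generator `H`) and `x_v² x^d ∈ I²` (through `H₁, H₂`), then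
`x_v x^d ∈ I²`. The pair `H₁, H₂` already works unless `v ∈ H₁ ∩ H₂` and `x_v ∤ x^d`, so that
`v ∉ H`. Then `H` pairs with `H₂` if `H ∩ H₂ ⊆ H₁`, with `H₁` if `H ∩ H₁ ⊆ H₂`, and otherwise
`H, H₁, H₂` make a special triangle `{v, j, k}` whose monomial `x^{H∩H₁∩H₂} x^{H∪H₁∪H₂}`
divides `x_v x^d`.
-/

open scoped Pointwise

namespace MvPolynomial

variable {σ R : Type*}

noncomputable def sqfExp (H : Finset σ) : σ →₀ ℕ := Finsupp.indicator H fun _ _ => 1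

theorem sqfExp_apply [DecidableEq σ] (H : Finset σ) (a : σ) :
    sqfExp H a = if a ∈ H then 1 else 0 := by
  simp [sqfExp, Finsupp.indicator_apply]

theorem prod_X_eq_monomial_sqfExp [CommSemiring R] (H : Finset σ) :
    ∏ a ∈ H, (X a : MvPolynomial σ R) = monomial (sqfExp H) 1 := by
  simpa [sqfExp] using prod_X_pow (R := R) (fun _ => 1) H

theorem span_monomial_mul_span_monomial [CommSemiring R] (A B : Set (σ →₀ ℕ)) :
    Ideal.span ((fun d => monomial d (1 : R)) '' A) * Ideal.span ((fun d => monomial d 1) '' B) =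
      Ideal.span ((fun d => monomial d 1) '' (A + B)) := by
  rw [Ideal.span_mul_span', ← Set.image2_mul, ← Set.image2_add, Set.image_image2,
    Set.image2_image_left, Set.image2_image_right]
  simp only [monomial_mul, mul_one]

end MvPolynomial

section SquarefreeMonomialIdeal

variable {K V : Type} [Field K] (E : Set (Finset V))

theorem sqfIdeal_eq_span_monomial :
    sqfIdeal K E = Ideal.span ((fun d => monomial d 1) '' (sqfExp '' E)) := by
  simp only [sqfIdeal, prod_X_eq_monomial_sqfExp, Set.image_image]

theorem mem_sqfIdeal_iff (f : MvPolynomial V K) :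
    f ∈ sqfIdeal K E ↔ ∀ m ∈ f.support, ∃ H ∈ E, sqfExp H ≤ m := by
  simp [sqfIdeal_eq_span_monomial, mem_ideal_span_monomial_image]

theorem mem_sqfIdeal_sq_iff (f : MvPolynomial V K) :
    f ∈ sqfIdeal K E ^ 2 ↔
      ∀ m ∈ f.support, ∃ H₁ ∈ E, ∃ H₂ ∈ E, sqfExp H₁ + sqfExp H₂ ≤ m := by
  simp [sq, sqfIdeal_eq_span_monomial, span_monomial_mul_span_monomial,
    mem_ideal_span_monomial_image, Set.mem_add]

theorem monomial_mem_sqfIdeal_sq_iff (e : V →₀ ℕ) :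
    monomial e 1 ∈ sqfIdeal K E ^ 2 ↔ ∃ H₁ ∈ E, ∃ H₂ ∈ E, sqfExp H₁ + sqfExp H₂ ≤ e := by
  classical
  rw [mem_sqfIdeal_sq_iff, support_monomial, if_neg one_ne_zero]
  simp

end SquarefreeMonomialIdeal

section Exponents

open Finsupp

variable {V : Type} [DecidableEq V] {H H₁ H₂ : Finset V} {v : V} {d : V →₀ ℕ}

theorem sqfExp_add_le_single_add
    (h12 : sqfExp H₁ + sqfExp H₂ ≤ single v 1 + (single v 1 + d))
    (hv : v ∈ H₁ → v ∈ H₂ → 0 < d v) :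
    sqfExp H₁ + sqfExp H₂ ≤ single v 1 + d := by
  intro a
  have h := h12 a
  simp only [Finsupp.coe_add, Pi.add_apply, single_apply, sqfExp_apply] at h ⊢
  grind

theorem sqfExp_add_le_single_add_of_inter_subset (hHd : sqfExp H ≤ d)
    (h12 : sqfExp H₁ + sqfExp H₂ ≤ single v 1 + (single v 1 + d))
    (hsub : H ∩ H₂ ⊆ H₁) :
    sqfExp H + sqfExp H₂ ≤ single v 1 + d := by
  intro a
  have h := h12 a
  have hH := hHd a
  have hsub := @hsub a
  simp only [Finsupp.coe_add, Pi.add_apply, single_apply, sqfExp_apply, Finset.mem_inter] at h hH hsub ⊢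
  grind

theorem sqfExp_inter_add_union_le_single_add (hHd : sqfExp H ≤ d)
    (h12 : sqfExp H₁ + sqfExp H₂ ≤ single v 1 + (single v 1 + d)) :
    sqfExp (H ∩ H₁ ∩ H₂) + sqfExp (H ∪ H₁ ∪ H₂) ≤ single v 1 + d := by
  intro a
  have h := h12 a
  have hH := hHd a
  simp only [Finsupp.coe_add, Pi.add_apply, single_apply, sqfExp_apply, Finset.mem_inter,
    Finset.mem_union] at h hH ⊢
  grind

theorem makeSpecialTriangle_of_not_subset {j k : V} (hvH : v ∉ H) (hv₁ : v ∈ H₁) (hv₂ : v ∈ H₂)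
    (hj : j ∈ H ∩ H₂) (hj₁ : j ∉ H₁) (hk : k ∈ H ∩ H₁) (hk₂ : k ∉ H₂) :
    MakeSpecialTriangle H H₁ H₂ v j k := by
  rw [Finset.mem_inter] at hj hk
  refine ⟨?_, ?_, ?_, ?_, ?_, ?_⟩ <;> try ext
  all_goals grind

end Exponents

section SpecialTriangles

variable {V : Type} [DecidableEq V] {E : Set (Finset V)}

theorem exists_sqfExp_add_le_single_add
    (hsp : ∀ H₁ ∈ E, ∀ H₂ ∈ E, ∀ H₃ ∈ E, ∀ i j k : V, MakeSpecialTriangle H₁ H₂ H₃ i j k →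
      ∃ G₁ ∈ E, ∃ G₂ ∈ E, sqfExp G₁ + sqfExp G₂ ≤ sqfExp (H₁ ∩ H₂ ∩ H₃) + sqfExp (H₁ ∪ H₂ ∪ H₃))
    {v : V} {d : V →₀ ℕ} (hI : ∃ H ∈ E, sqfExp H ≤ d)
    (hI2 : ∃ H₁ ∈ E, ∃ H₂ ∈ E,
      sqfExp H₁ + sqfExp H₂ ≤ Finsupp.single v 1 + (Finsupp.single v 1 + d)) :
    ∃ G₁ ∈ E, ∃ G₂ ∈ E, sqfExp G₁ + sqfExp G₂ ≤ Finsupp.single v 1 + d := by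
  obtain ⟨H, hH, hHd⟩ := hI
  obtain ⟨H₁, h₁, H₂, h₂, h12⟩ := hI2
  by_cases hv : v ∈ H₁ → v ∈ H₂ → 0 < d v
  · exact ⟨H₁, h₁, H₂, h₂, sqfExp_add_le_single_add h12 hv⟩
  push Not at hv
  obtain ⟨hv₁, hv₂, hdv⟩ := hv
  have hvH : v ∉ H := fun hvH => by
    have := hHd v
    simp only [sqfExp_apply, if_pos hvH] at this
    omega
  by_cases hsub₂ : H ∩ H₂ ⊆ H₁
  · exact ⟨H, hH, H₂, h₂, sqfExp_add_le_single_add_of_inter_subset hHd h12 hsub₂⟩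
  by_cases hsub₁ : H ∩ H₁ ⊆ H₂
  · rw [add_comm (sqfExp H₁)] at h12
    exact ⟨H, hH, H₁, h₁, sqfExp_add_le_single_add_of_inter_subset hHd h12 hsub₁⟩
  obtain ⟨j, hj, hj₁⟩ := Finset.not_subset.1 hsub₂
  obtain ⟨k, hk, hk₂⟩ := Finset.not_subset.1 hsub₁
  obtain ⟨G₁, hG₁, G₂, hG₂, hG⟩ := hsp H hH H₁ h₁ H₂ h₂ v j k
    (makeSpecialTriangle_of_not_subset hvH hv₁ hv₂ hj hj₁ hk hk₂)
  exact ⟨G₁, hG₁, G₂, hG₂, hG.trans (sqfExp_inter_add_union_le_single_add hHd h12)⟩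

end SpecialTriangles

theorem stmt12_general (n : ℕ) (K : Type) [Field K] (E : Set (Finset (Fin n)))
    (hsp : ∀ H₁ ∈ E, ∀ H₂ ∈ E, ∀ H₃ ∈ E, ∀ i j k : Fin n,
      MakeSpecialTriangle H₁ H₂ H₃ i j k →
        (∏ a ∈ H₁ ∩ H₂ ∩ H₃, (X a : MvPolynomial (Fin n) K)) *
          (∏ a ∈ H₁ ∪ H₂ ∪ H₃, (X a : MvPolynomial (Fin n) K)) ∈ (sqfIdeal K E) ^ 2) :
    ∀ v : Fin n,
      Ideal.span {(X v : MvPolynomial (Fin n) K)} * sqfIdeal K E ⊓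
        Submodule.colon ((sqfIdeal K E) ^ 2) (Ideal.span {(X v : MvPolynomial (Fin n) K)}) ≤
      (sqfIdeal K E) ^ 2 := by
  have hsp' := fun H₁ h₁ H₂ h₂ H₃ h₃ i j k hijk => (monomial_mem_sqfIdeal_sq_iff E _).1 <| by
    simpa only [prod_X_eq_monomial_sqfExp, monomial_mul, mul_one]
      using hsp H₁ h₁ H₂ h₂ H₃ h₃ i j k hijk
  rintro v f ⟨hf, hcolon⟩
  obtain ⟨g, hg, rfl⟩ := Ideal.mem_span_singleton_mul.1 hf
  have hx2g : X v * (X v * g) ∈ sqfIdeal K E ^ 2 := by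
    simpa [mul_comm] using Submodule.mem_colon.1 hcolon (X v) (Ideal.mem_span_singleton_self _)
  rw [mem_sqfIdeal_sq_iff, support_X_mul]
  simp only [Finset.mem_map, addLeftEmbedding_apply, forall_exists_index, and_imp]
  rintro _ d hd rfl
  refine exists_sqfExp_add_le_single_add hsp' ((mem_sqfIdeal_iff E g).1 hg d hd)
    ((mem_sqfIdeal_sq_iff E _).1 hx2g _ ?_)
  simpa [mem_support_iff] using hd

/-- If for every special triangle made by minimal generators `H₁, H₂, H₃` of a squarefree
monomial ideal `I` the monomial `x^{H₁∩H₂∩H₃} · x^{H₁∪H₂∪H₃}` lies in `I²`, then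
`x·I ∩ (I² : x) ⊆ I²` for every variable `x`. -/
theorem stmt12 (n : ℕ) (K : Type) [Field K] (E : Set (Finset (Fin n)))
    (hmin : ∀ H ∈ E, ∀ H' ∈ E, H ⊆ H' → H = H')
    (hsp : ∀ H₁ ∈ E, ∀ H₂ ∈ E, ∀ H₃ ∈ E, ∀ i j k : Fin n,
      MakeSpecialTriangle H₁ H₂ H₃ i j k →
        (∏ a ∈ H₁ ∩ H₂ ∩ H₃, (X a : MvPolynomial (Fin n) K)) *
          (∏ a ∈ H₁ ∪ H₂ ∪ H₃, (X a : MvPolynomial (Fin n) K)) ∈ (sqfIdeal K E) ^ 2) :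
    ∀ v : Fin n,
      Ideal.span {(X v : MvPolynomial (Fin n) K)} * sqfIdeal K E ⊓
        Submodule.colon ((sqfIdeal K E) ^ 2) (Ideal.span {(X v : MvPolynomial (Fin n) K)}) ≤
      (sqfIdeal K E) ^ 2 :=
  stmt12_general n K E hsp
end
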